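/- arXiv:2102.08236 — 4 statements merged into one kernel-verified Lean document; each statement's English description precedes it below -/
import Mathlib

section
/- For every integer k ≥ 1, the element s_k/k − (−1)^{k−1} e_k of ℚ[z_1,…,z_n] lies in m², the square of the ideal m generated by e_1,…,e_n. -/
/-!
Newton's identity `s_k = (-1)^(k+1) k e_k - ∑_{0<i<k} (-1)^i e_i s_{k-i}` shows first that every
power sum `s_k` with `k ≥ 1` lies in `m`, since each term carries a factor `e_i` with `i ≥ 1`
(and `e_i = 0` for `i > n`). Read again, it says that `s_k - (-1)^(k+1) k e_k` is a sum of
products `e_i s_{k-i}` of two elements of `m`; dividing by `k` gives the claim.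
-/

open Finset

namespace MvPolynomial

variable (σ R : Type*) [Fintype σ] [CommRing R]

/-- The ideal `m`. -/
noncomputable def esymmIdeal : Ideal (MvPolynomial σ R) :=
  Ideal.span (esymm σ R '' Set.Icc 1 (Fintype.card σ))

variable {σ R}

theorem esymm_eq_zero_of_card_lt {k : ℕ} (hk : Fintype.card σ < k) : esymm σ R k = 0 := by
  rw [esymm, powersetCard_eq_empty.mpr (by simpa using hk), sum_empty]

theorem esymm_mem_esymmIdeal {k : ℕ} (hk : 0 < k) : esymm σ R k ∈ esymmIdeal σ R := by
  rcases le_or_gt k (Fintype.card σ) with hle | hlt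
  · exact Ideal.subset_span ⟨k, ⟨hk, hle⟩, rfl⟩
  · rw [esymm_eq_zero_of_card_lt hlt]
    exact zero_mem _

theorem psum_mem_esymmIdeal {k : ℕ} (hk : 0 < k) : psum σ R k ∈ esymmIdeal σ R := by
  rw [psum_eq_mul_esymm_sub_sum σ R k hk]
  refine sub_mem (Ideal.mul_mem_left _ _ (esymm_mem_esymmIdeal hk)) (sum_mem ?_)
  rintro ⟨i, j⟩ hij
  simp only [mem_filter, HasAntidiagonal.mem_antidiagonal, Set.mem_Ioo] at hij
  exact Ideal.mul_mem_right _ _ (Ideal.mul_mem_left _ _ (esymm_mem_esymmIdeal hij.2.1))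

theorem psum_sub_mul_esymm_mem_esymmIdeal_sq {k : ℕ} (hk : 0 < k) :
    psum σ R k - (-1) ^ (k + 1) * k * esymm σ R k ∈ esymmIdeal σ R ^ 2 := by
  rw [psum_eq_mul_esymm_sub_sum σ R k hk, sub_sub_cancel_left]
  refine neg_mem (sum_mem ?_)
  rintro ⟨i, j⟩ hij
  simp only [mem_filter, HasAntidiagonal.mem_antidiagonal, Set.mem_Ioo] at hij
  rw [mul_assoc, sq]
  exact Ideal.mul_mem_left _ _ <| Ideal.mul_mem_mul (esymm_mem_esymmIdeal hij.2.1)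
    (psum_mem_esymmIdeal (by omega))

end MvPolynomial

open MvPolynomial in
/-- **Lemma (Newton's identities, first-order form).** In `ℚ[z_1,…,z_n]`, for every `k ≥ 1`
the element `s_k / k − (−1)^(k−1) e_k` lies in `m²`, where `e_k` is the `k`-th elementary
symmetric polynomial, `s_k` the `k`-th power sum, and `m` is the ideal generated by
`e_1, …, e_n`. -/
theorem stmt_2 (n k : ℕ) (hk : 1 ≤ k) :
    (k : ℚ)⁻¹ • psum (Fin n) ℚ k -
        (-1 : MvPolynomial (Fin n) ℚ) ^ (k - 1) * esymm (Fin n) ℚ k ∈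
      (Ideal.span (esymm (Fin n) ℚ '' Set.Icc 1 n)) ^ 2 := by
  have hk0 : (k : ℚ) ≠ 0 := by positivity
  have hsign : (-1 : MvPolynomial (Fin n) ℚ) ^ (k - 1) = (-1) ^ (k + 1) := by
    rw [show k + 1 = k - 1 + 2 by omega, pow_add, neg_one_sq, mul_one]
  have hrescale : (k : ℚ)⁻¹ • psum (Fin n) ℚ k -
      (-1 : MvPolynomial (Fin n) ℚ) ^ (k - 1) * esymm (Fin n) ℚ k =
      C (k : ℚ)⁻¹ * (psum (Fin n) ℚ k - (-1) ^ (k + 1) * (k : MvPolynomial (Fin n) ℚ) *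
        esymm (Fin n) ℚ k) := by
    have hCk : C (k : ℚ)⁻¹ * (k : MvPolynomial (Fin n) ℚ) = 1 := by
      rw [← map_natCast C, ← map_mul, inv_mul_cancel₀ hk0, map_one]
    rw [smul_eq_C_mul, hsign]
    linear_combination ((-1) ^ (k + 1) * esymm (Fin n) ℚ k) * hCk
  have hmem := psum_sub_mul_esymm_mem_esymmIdeal_sq (σ := Fin n) (R := ℚ) hk
  rw [esymmIdeal, Fintype.card_fin] at hmem
  rw [hrescale]
  exact Ideal.mul_mem_left _ _ hmem
end

section
/- For every integer k > n, the element s_k/k − ((−1)^k/2)·∑_{i=k−n}^{n} e_i e_{k−i} of ℚ[z_1,…,z_n] lies in m³, the cube of the ideal m generated by e_1,…,e_n (here the sum is empty when k > 2n). -/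
/-!
Newton's identity `s_k = (-1)^(k+1) k e_k - ∑_{0<i<k} (-1)^i e_i s_{k-i}` shows by strong
induction that every `s_k` lies in `m`, then that `s_k ≡ (-1)^(k+1) k e_k mod m²`, and,
substituting this congruence for `s_{k-i}` back into the identity, that
`s_k ≡ (-1)^(k+1) k e_k + (-1)^k ∑_{0<i<k} (k-i) e_i e_{k-i} mod m³`.
Averaging the sum with its reflection `i ↦ k - i` replaces the weight `k - i` by `k / 2`.
For `k > n` we have `e_k = 0`, and only the terms with `k - n ≤ i ≤ n` survive.
-/

open MvPolynomial Finset

lemma Finset.sum_Ioo_reflect {M : Type*} [AddCommMonoid M] (f : ℕ → M) (k : ℕ) :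
    ∑ i ∈ Ioo 0 k, f (k - i) = ∑ i ∈ Ioo 0 k, f i := by
  rw [← Ico_add_one_left_eq_Ioo, zero_add, sum_Ico_reflect f 1 (Nat.le_succ k)]
  simp

lemma Finset.two_nsmul_sum_Ioo_tsub_nsmul {M : Type*} [AddCommMonoid M] {k : ℕ} (a : ℕ → M)
    (ha : ∀ i ∈ Ioo 0 k, a (k - i) = a i) :
    2 • ∑ i ∈ Ioo 0 k, (k - i) • a i = k • ∑ i ∈ Ioo 0 k, a i := by
  have hreflect : ∑ i ∈ Ioo 0 k, (k - i) • a i = ∑ i ∈ Ioo 0 k, i • a i := by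
    rw [← sum_Ioo_reflect]
    refine sum_congr rfl fun i hi => ?_
    rw [ha i hi, Nat.sub_sub_self (mem_Ioo.1 hi).2.le]
  rw [two_nsmul]
  nth_rw 2 [hreflect]
  rw [← sum_add_distrib, smul_sum]
  refine sum_congr rfl fun i hi => ?_
  rw [← add_nsmul, Nat.sub_add_cancel (mem_Ioo.1 hi).2.le]

namespace MvPolynomial

lemma esymm_eq_zero_of_card_lt_s3 {σ R : Type*} [Fintype σ] [CommSemiring R] {j : ℕ}
    (h : Fintype.card σ < j) : esymm σ R j = 0 := by
  rw [esymm, powersetCard_eq_empty.2 (by simpa using h), sum_empty]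

variable {σ R : Type*} [Fintype σ] [CommRing R]

lemma psum_eq_sub_sum_Ioo {k : ℕ} (hk : 0 < k) :
    psum σ R k = (-1) ^ (k + 1) * k * esymm σ R k -
      ∑ i ∈ Ioo 0 k, (-1) ^ i * esymm σ R i * psum σ R (k - i) := by
  rw [psum_eq_mul_esymm_sub_sum _ _ k hk, sum_filter, Nat.sum_antidiagonal_eq_sum_range_succ_mk,
    ← sum_filter]
  congr 2
  ext i
  simp only [mem_filter, mem_range, Set.mem_Ioo, mem_Ioo]
  omega

section EsymmIdeal

variable {I : Ideal (MvPolynomial σ R)} (hI : ∀ j, 0 < j → esymm σ R j ∈ I)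
include hI

lemma psum_mem_of_esymm_mem {k : ℕ} (hk : 0 < k) : psum σ R k ∈ I := by
  induction k using Nat.strong_induction_on with
  | _ k ih =>
    rw [psum_eq_sub_sum_Ioo hk]
    refine sub_mem (I.mul_mem_left _ (hI k hk)) (sum_mem fun i hi => ?_)
    obtain ⟨hi0, hik⟩ := mem_Ioo.1 hi
    exact I.mul_mem_left _ (ih (k - i) (by omega) (by omega))

lemma psum_sub_esymm_mem_sq {k : ℕ} (hk : 0 < k) :
    psum σ R k - (-1) ^ (k + 1) * k * esymm σ R k ∈ I ^ 2 := by
  rw [psum_eq_sub_sum_Ioo hk, sub_sub_cancel_left, pow_two]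
  refine neg_mem (sum_mem fun i hi => ?_)
  obtain ⟨hi0, hik⟩ := mem_Ioo.1 hi
  exact Ideal.mul_mem_mul (I.mul_mem_left _ (hI i hi0))
    (psum_mem_of_esymm_mem hI (by omega))

lemma psum_sub_esymm_add_sum_mem_pow_three {k : ℕ} (hk : 0 < k) :
    psum σ R k - (-1) ^ (k + 1) * k * esymm σ R k +
      (-1) ^ (k + 1) * ∑ i ∈ Ioo 0 k, (k - i) • (esymm σ R i * esymm σ R (k - i)) ∈ I ^ 3 := by
  have hsum : psum σ R k - (-1) ^ (k + 1) * k * esymm σ R k +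
      (-1) ^ (k + 1) * ∑ i ∈ Ioo 0 k, (k - i) • (esymm σ R i * esymm σ R (k - i)) =
      ∑ i ∈ Ioo 0 k, (-1) ^ (i + 1) * ((psum σ R (k - i) -
          (-1) ^ (k - i + 1) * (k - i : ℕ) * esymm σ R (k - i)) * esymm σ R i) := by
    rw [psum_eq_sub_sum_Ioo hk, mul_sum, sub_sub_cancel_left, neg_add_eq_sub, ← sum_sub_distrib]
    refine sum_congr rfl fun i hi => ?_
    have hsign : (-1 : MvPolynomial σ R) ^ (k - i) * (-1) ^ i = (-1) ^ k := by
      rw [← pow_add, Nat.sub_add_cancel (mem_Ioo.1 hi).2.le]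
    rw [nsmul_eq_mul]
    linear_combination ((k - i : ℕ) * esymm σ R i * esymm σ R (k - i)) * hsign
  rw [hsum, pow_succ]
  refine sum_mem fun i hi => (I ^ 2 * I).mul_mem_left _ ?_
  obtain ⟨hi0, hik⟩ := mem_Ioo.1 hi
  exact Ideal.mul_mem_mul (psum_sub_esymm_mem_sq hI (by omega)) (hI i hi0)

end EsymmIdeal

lemma esymm_mem_span_esymm {j : ℕ} (hj : 0 < j) :
    esymm σ R j ∈ Ideal.span (esymm σ R '' Set.Icc 1 (Fintype.card σ)) := by
  rcases le_or_gt j (Fintype.card σ) with hj' | hj'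
  · exact Ideal.subset_span ⟨j, ⟨hj, hj'⟩, rfl⟩
  · rw [esymm_eq_zero_of_card_lt_s3 hj']
    exact zero_mem _

lemma sum_Ioo_esymm_mul_esymm {k : ℕ} (hk : Fintype.card σ < k) :
    ∑ i ∈ Ioo 0 k, esymm σ R i * esymm σ R (k - i) =
      ∑ i ∈ Icc (k - Fintype.card σ) (Fintype.card σ), esymm σ R i * esymm σ R (k - i) := by
  refine (sum_subset (fun i hi => ?_) fun i hi hi' => ?_).symm
  · simp only [mem_Icc, mem_Ioo] at hi ⊢
    omega
  · simp only [mem_Icc, mem_Ioo, not_and_or, not_le] at hi hi'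
    rcases hi' with hi' | hi'
    · rw [esymm_eq_zero_of_card_lt_s3 (R := R) (j := k - i) (by omega), mul_zero]
    · rw [esymm_eq_zero_of_card_lt_s3 hi', zero_mul]

lemma inv_smul_psum_sub_smul_sum_esymm_mul_esymm_mem_pow_three {K : Type*} [Field K] [CharZero K]
    {k : ℕ} (hk : Fintype.card σ < k) :
    (k : K)⁻¹ • psum σ K k - ((-1 : K) ^ k / 2) •
        ∑ i ∈ Icc (k - Fintype.card σ) (Fintype.card σ), esymm σ K i * esymm σ K (k - i) ∈
      Ideal.span (esymm σ K '' Set.Icc 1 (Fintype.card σ)) ^ 3 := by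
  have hmem := psum_sub_esymm_add_sum_mem_pow_three
    (fun j hj => esymm_mem_span_esymm (σ := σ) (R := K) hj) (k := k) (by omega)
  have hsymm := two_nsmul_sum_Ioo_tsub_nsmul (k := k)
    (fun i => esymm σ K i * esymm σ K (k - i)) fun i hi => by
      rw [Nat.sub_sub_self (mem_Ioo.1 hi).2.le, mul_comm]
  rw [esymm_eq_zero_of_card_lt_s3 hk, mul_zero, sub_zero] at hmem
  rw [sum_Ioo_esymm_mul_esymm hk] at hsymm
  set S := ∑ i ∈ Icc (k - Fintype.card σ) (Fintype.card σ), esymm σ K i * esymm σ K (k - i)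
  set T := ∑ i ∈ Ioo 0 k, (k - i) • (esymm σ K i * esymm σ K (k - i))
  have hk' : C (k : K)⁻¹ * (k : MvPolynomial σ K) = 1 := by
    rw [← map_natCast C, ← map_mul, inv_mul_cancel₀ (Nat.cast_ne_zero.2 (by omega)), map_one]
  have h2 : C (2 : K)⁻¹ * (2 : MvPolynomial σ K) = 1 := by
    rw [← map_ofNat C, ← map_mul, inv_mul_cancel₀ two_ne_zero, map_one]
  have hrepr : (k : K)⁻¹ • psum σ K k - ((-1 : K) ^ k / 2) • S =
      (k : K)⁻¹ • (psum σ K k + (-1) ^ (k + 1) * T) := by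
    simp only [smul_eq_C_mul, nsmul_eq_mul, Nat.cast_ofNat, div_eq_mul_inv, map_mul, map_pow,
      map_neg, map_one] at hsymm ⊢
    linear_combination (-1) ^ k * (C (k : K)⁻¹ * C (2 : K)⁻¹ * hsymm + C (2 : K)⁻¹ * S * hk' -
      C (k : K)⁻¹ * T * h2)
  rw [hrepr]
  exact Submodule.smul_of_tower_mem _ _ hmem

end MvPolynomial

open MvPolynomial in
/-- **Lemma (Newton's identities, second-order form).** In `ℚ[z_1,…,z_n]`, for every `k > n`
the element `s_k / k − ((−1)^k / 2) · ∑_{i=k−n}^{n} e_i e_{k−i}` lies in `m³`, where `e_i` is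
the `i`-th elementary symmetric polynomial, `s_k` the `k`-th power sum, and `m` is the ideal
generated by `e_1, …, e_n` (the sum is empty when `k > 2n`). -/
theorem stmt_3 (n k : ℕ) (hk : n < k) :
    (k : ℚ)⁻¹ • psum (Fin n) ℚ k -
        ((-1 : ℚ) ^ k / 2) •
          ∑ i ∈ Finset.Icc (k - n) n, esymm (Fin n) ℚ i * esymm (Fin n) ℚ (k - i) ∈
      (Ideal.span (esymm (Fin n) ℚ '' Set.Icc 1 n)) ^ 3 := by
  simpa only [Fintype.card_fin] using
    inv_smul_psum_sub_smul_sum_esymm_mul_esymm_mem_pow_three (σ := Fin n) (K := ℚ)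
      (by simpa only [Fintype.card_fin] using hk)
end

section
/- Let E be the elliptic curve over ℚ given by the Weierstrass equation y² + xy = x³ − x. The affine point T = (0,0) lies on E, satisfies 2T = O (so T is a 2-torsion point), and every point P ∈ E(ℚ) with 2P = O equals either the point at infinity O or T. In other words, T = (0,0) is the unique nontrivial rational 2-torsion point of E. -/
/-!
A rational point `P = (x, y)` satisfies `2P = O` exactly when `P = -P`, i.e. `y = -y - x`.
Substituting `y = -x/2` into the equation gives `x (4x² + x - 4) = 0`, and the quadratic factor
has discriminant `65`, which is not a rational square; hence `x = y = 0`.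
-/

/-- The elliptic curve `y² + xy = x³ − x` over `ℚ` (the modular curve `X₀⁺(65)`),
as a Weierstrass curve with coefficients `a₁ = 1`, `a₂ = 0`, `a₃ = 0`, `a₄ = −1`, `a₆ = 0`. -/
def E65 : WeierstrassCurve ℚ := ⟨1, 0, 0, -1, 0⟩

namespace WeierstrassCurve.Affine.Point

variable {F : Type*} [Field F] [DecidableEq F] {W : WeierstrassCurve.Affine F}

lemma two_smul_some_eq_zero_iff {x y : F} (h : W.Nonsingular x y) :
    2 • some x y h = 0 ↔ y = W.negY x y := by
  rw [two_smul]
  refine ⟨fun h2 => ?_, add_self_of_Y_eq⟩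
  by_contra hy
  exact some_ne_zero _ ((add_self_of_Y_ne hy).symm.trans h2)

end WeierstrassCurve.Affine.Point

open WeierstrassCurve.Affine

lemma not_isSquare_65 : ¬ IsSquare (65 : ℚ) := by
  rw [show (65 : ℚ) = ((65 : ℕ) : ℚ) by norm_num, Rat.isSquare_natCast_iff]
  rintro ⟨r, hr⟩
  have hr8 : r ≤ 8 := by nlinarith
  interval_cases r <;> omega

lemma four_mul_sq_add_sub_four_ne_zero (x : ℚ) : 4 * (x * x) + x - 4 ≠ 0 := by
  intro hx
  have hdisc := discrim_eq_sq_of_quadratic_eq_zero (x := x) (a := 4) (b := 1) (c := -4)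
    (by linear_combination hx)
  exact not_isSquare_65 ⟨2 * 4 * x + 1, by rw [← sq, ← hdisc]; norm_num [discrim]⟩

lemma E65_nonsingular_zero_zero : E65.toAffine.Nonsingular 0 0 := by
  rw [nonsingular_iff, equation_iff]
  norm_num [E65]

lemma E65_eq_zero_of_equation_of_Y_eq_negY {x y : ℚ} (h : E65.toAffine.Equation x y)
    (hy : y = E65.toAffine.negY x y) : x = 0 ∧ y = 0 := by
  rw [equation_iff] at h
  simp only [negY, E65] at h hy
  have hyx : y = -x / 2 := by linarith
  subst hyx
  have hx : x * (4 * (x * x) + x - 4) = 0 := by linear_combination -4 * h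
  have hx0 := (mul_eq_zero.mp hx).resolve_right (four_mul_sq_add_sub_four_ne_zero x)
  exact ⟨hx0, by simp [hx0]⟩

/-- **The unique nontrivial rational 2-torsion point of `y² + xy = x³ − x`.**
The affine point `T = (0, 0)` lies on the curve, satisfies `2T = O`, and every rational point
`P` with `2P = O` equals `O` or `T`. -/
theorem stmt_8 :
    ∃ hT : E65.toAffine.Nonsingular 0 0,
      2 • (WeierstrassCurve.Affine.Point.some 0 0 hT) = 0 ∧
        ∀ P : E65.toAffine.Point, 2 • P = 0 →
          P = 0 ∨ P = WeierstrassCurve.Affine.Point.some 0 0 hT := by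
  refine ⟨E65_nonsingular_zero_zero,
    (Point.two_smul_some_eq_zero_iff _).mpr (by simp [negY, E65]), ?_⟩
  rintro (_ | @⟨x, y, h⟩) h2
  · exact Or.inl rfl
  obtain ⟨rfl, rfl⟩ :=
    E65_eq_zero_of_equation_of_Y_eq_negY h.1 ((Point.two_smul_some_eq_zero_iff h).mp h2)
  exact Or.inr rfl
end

section
/- Let E be the elliptic curve over ℚ given by the Weierstrass equation y² + xy = x³ − x, and let Q = (1,0) ∈ E(ℚ). Then there exists a point P in E(ℚ(√5)) with 2P = Q, and there exists a point P' in E(ℚ(√13)) with 2P' = Q (where Q is regarded as a point of E over these quadratic fields via base change). -/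
/-- The real quadratic field `ℚ(√5)`, as an intermediate field of `ℝ/ℚ`. -/
noncomputable def Qsqrt5 : IntermediateField ℚ ℝ := IntermediateField.adjoin ℚ {Real.sqrt 5}

/-- The real quadratic field `ℚ(√13)`, as an intermediate field of `ℝ/ℚ`. -/
noncomputable def Qsqrt13 : IntermediateField ℚ ℝ := IntermediateField.adjoin ℚ {Real.sqrt 13}

/-!
Over any field `F ⊇ ℚ`, the points of `y² + xy = x³ − x` whose double is `Q = (1, 0)` are
`(x, −1 − x)` with `x² = x + 1` and `(x, x + 1)` with `x² = 3x + 1`: in both cases the tangent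
line at the point (of slope `−1 − x`, resp. `x − 1`) meets the curve again at `−Q = (1, −1)`.
The first family is defined over `ℚ(√5)` (take `x = (1 + √5)/2`), the second over `ℚ(√13)`
(take `x = (3 + √13)/2`).
-/

open WeierstrassCurve IntermediateField

lemma WeierstrassCurve.Affine.Point.two_smul_some {F : Type*} [Field F] [DecidableEq F]
    {W : Affine F} {x y ℓ x' y' : F} (h : W.Nonsingular x y) (h' : W.Nonsingular x' y')
    (hy : y ≠ W.negY x y) (hℓ : W.slope x x y y = ℓ) (hx' : W.addX x x ℓ = x')
    (hy' : W.addY x x y ℓ = y') :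
    2 • Point.some x y h = .some x' y' h' := by
  subst hℓ hx' hy'
  rw [two_smul, add_self_of_Y_ne hy]

lemma IntermediateField.sq_gen_adjoin_sqrt (d : ℕ) :
    AdjoinSimple.gen ℚ (√(d : ℝ)) ^ 2 = (d : ℚ⟮√(d : ℝ)⟯) := by
  ext
  simp

namespace E65

lemma Δ_eq : E65.Δ = 65 := by
  simp [E65, Δ, b₂, b₄, b₆, b₈]
  norm_num

variable {F : Type*} [Field F] [Algebra ℚ F]

@[simp]
lemma baseChange_eq : E65.baseChange F = ⟨1, 0, 0, -1, 0⟩ := by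
  simp [E65, baseChange, WeierstrassCurve.map]

lemma nonsingular_baseChange_iff {x y : F} :
    (E65.baseChange F).toAffine.Nonsingular x y ↔ y ^ 2 + x * y = x ^ 3 - x := by
  have hΔ : (E65.baseChange F).Δ ≠ 0 := by
    rw [baseChange, map_Δ, Δ_eq]
    exact (map_ne_zero _).mpr (by norm_num)
  rw [← Affine.equation_iff_nonsingular_of_Δ_ne_zero hΔ, Affine.equation_iff, baseChange_eq]
  ring_nf

lemma nonsingular_baseChange_one_zero : (E65.baseChange F).toAffine.Nonsingular 1 0 :=
  nonsingular_baseChange_iff.mpr (by ring)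

variable [DecidableEq F]

lemma two_smul_some_of_sq_eq_add_one {x : F} (hx : x ^ 2 = x + 1) :
    2 • Affine.Point.some x (-1 - x)
        (nonsingular_baseChange_iff.mpr (by linear_combination (-x - 1) * hx)) =
      .some 1 0 nonsingular_baseChange_one_zero := by
  have := algebraRat.charZero F
  have hx2 : x + 2 ≠ 0 := by
    intro h
    rw [show x = -2 by linear_combination h] at hx
    norm_num at hx
  have hy : -1 - x ≠ (E65.baseChange F).toAffine.negY x (-1 - x) := by
    simp only [Affine.negY, baseChange_eq]
    exact fun h ↦ hx2 (by linear_combination -h)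
  refine Affine.Point.two_smul_some _ _ hy ?_ ?_ ?_ (ℓ := -1 - x)
  · rw [Affine.slope_of_Y_ne rfl hy, div_eq_iff (sub_ne_zero.mpr hy)]
    simp only [Affine.negY, baseChange_eq]
    linear_combination 2 * hx
  · simp only [Affine.addX, baseChange_eq]
    linear_combination hx
  · simp only [Affine.addY, Affine.negAddY, Affine.addX, Affine.negY, baseChange_eq]
    linear_combination (x - 1) * hx

lemma two_smul_some_of_sq_eq_three_mul_add_one {x : F} (hx : x ^ 2 = 3 * x + 1) :
    2 • Affine.Point.some x (x + 1)
        (nonsingular_baseChange_iff.mpr (by linear_combination (-x - 1) * hx)) =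
      .some 1 0 nonsingular_baseChange_one_zero := by
  have := algebraRat.charZero F
  have hx2 : 3 * x + 2 ≠ 0 := by
    intro h
    rw [show x = -2 / 3 by linear_combination h / 3] at hx
    norm_num at hx
  have hy : x + 1 ≠ (E65.baseChange F).toAffine.negY x (x + 1) := by
    simp only [Affine.negY, baseChange_eq]
    exact fun h ↦ hx2 (by linear_combination h)
  refine Affine.Point.two_smul_some _ _ hy ?_ ?_ ?_ (ℓ := x - 1)
  · rw [Affine.slope_of_Y_ne rfl hy, div_eq_iff (sub_ne_zero.mpr hy)]
    simp only [Affine.negY, baseChange_eq]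
    ring
  · simp only [Affine.addX, baseChange_eq]
    linear_combination hx
  · simp only [Affine.addY, Affine.negAddY, Affine.addX, Affine.negY, baseChange_eq]
    linear_combination (1 - x) * hx

end E65

/-- **Halving `Q = (1, 0)` over `ℚ(√5)` and `ℚ(√13)`.**  On the base change of the curve
`y² + xy = x³ − x` to `ℚ(√5)` there is a point `P` with `2P = Q = (1, 0)`, and likewise on the
base change to `ℚ(√13)` there is a point `P'` with `2P' = Q`. -/
theorem stmt_9 :
    (∃ hQ : (E65.baseChange Qsqrt5).toAffine.Nonsingular 1 0,
      ∃ P : (E65.baseChange Qsqrt5).toAffine.Point,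
        2 • P = WeierstrassCurve.Affine.Point.some _ _ hQ) ∧
    (∃ hQ : (E65.baseChange Qsqrt13).toAffine.Nonsingular 1 0,
      ∃ P : (E65.baseChange Qsqrt13).toAffine.Point,
        2 • P = WeierstrassCurve.Affine.Point.some _ _ hQ) := by
  obtain ⟨s, hs⟩ : ∃ s : Qsqrt5, s ^ 2 = 5 := ⟨_, sq_gen_adjoin_sqrt 5⟩
  obtain ⟨t, ht⟩ : ∃ t : Qsqrt13, t ^ 2 = 13 := ⟨_, sq_gen_adjoin_sqrt 13⟩
  exact ⟨⟨E65.nonsingular_baseChange_one_zero, _, E65.two_smul_some_of_sq_eq_add_one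
      (x := (1 + s) / 2) (by linear_combination hs / 4)⟩,
    ⟨E65.nonsingular_baseChange_one_zero, _, E65.two_smul_some_of_sq_eq_three_mul_add_one
      (x := (3 + t) / 2) (by linear_combination ht / 4)⟩⟩
end
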